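/- Let F be a finite field of order Q, let C be the Reed–Solomon code of length n ≤ Q, dimension k, and rate R = k/n with distinct evaluation points α₁,...,α_n ∈ F. Suppose L is a set of ℓ+1 distinct codewords and z ∈ F^n. Then the total number of agreements Σ_{c ∈ L} |{i : c_i = z_i}| is at most (ℓ+1)n/Q + sqrt((ℓ+1)·n·(Q + (ℓ+1)(k−1))). -/

import Mathlib

/-!
Send a word `w : ι → A` to the vector `(i, y) ↦ [w i = y] - 1/q` in `ℝ^(ι × A)`, where `q = |A|`.
The inner product of the vectors of `u` and `w` is the number of agreements of `u` and `w`
minus `|ι|/q`. Pairing the sum `X` of the vectors of the codewords in `L` with the vector `W`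
of `z` therefore gives the total number of agreements minus `m|ι|/q`, where `m = |L|`, while
`‖W‖² ≤ |ι|` and `‖X‖² ≤ m(q - 1) + m(m - 1)(k - 1)`, since two distinct polynomials of degree
`< k` agree at fewer than `k` points. Cauchy–Schwarz gives the bound.
-/

open Finset

/-- Evaluation of the polynomial with coefficient vector `c` (degree `< k`) at `x`. -/
def evalc {F : Type*} [CommSemiring F] {k : ℕ} (c : Fin k → F) (x : F) : F :=
  ∑ i : Fin k, c i * x ^ (i : ℕ)

open Polynomial

theorem evalc_eq_eval {R : Type*} [CommRing R] {k : ℕ} (c : Fin k → R) (x : R) :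
    evalc c x = ((degreeLTEquiv R k).symm c : R[X]).eval x := by
  rw [eval_eq_sum_degreeLTEquiv (Submodule.coe_mem _), Subtype.coe_eta,
    LinearEquiv.apply_symm_apply, evalc]

theorem card_filter_evalc_eq_lt {R ι : Type*} [CommRing R] [IsDomain R] [DecidableEq R]
    [Fintype ι] {k : ℕ} {α : ι → R} (hα : Function.Injective α) {f g : Fin k → R}
    (hfg : f ≠ g) : #{i | evalc f (α i) = evalc g (α i)} < k := by
  by_contra! hk
  set s : Finset ι := {i | evalc f (α i) = evalc g (α i)}
  have hdeg (c : Fin k → R) :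
      ((degreeLTEquiv R k).symm c : R[X]).degree < #(s.map ⟨α, hα⟩) :=
    (mem_degreeLT.mp (Submodule.coe_mem _)).trans_le (by simpa using hk)
  have heq := eq_of_degrees_lt_of_eval_finset_eq _ (hdeg f) (hdeg g) (by
    simp only [mem_map, Function.Embedding.coeFn_mk, forall_exists_index, and_imp]
    rintro _ i hi rfl
    rw [← evalc_eq_eval, ← evalc_eq_eval]
    exact (mem_filter.mp hi).2)
  exact hfg ((degreeLTEquiv R k).symm.injective (Subtype.ext heq))

theorem sum_sum_le_of_diag_le_of_offDiag_le {β : Type*} (L : Finset β)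
    (x : β → β → ℝ) (d a : ℝ) (hd : ∀ b ∈ L, x b b ≤ d)
    (ha : ∀ b ∈ L, ∀ b' ∈ L, b ≠ b' → x b b' ≤ a) :
    ∑ b ∈ L, ∑ b' ∈ L, x b b' ≤ #L * (d - a + #L * a) := by
  classical
  calc ∑ b ∈ L, ∑ b' ∈ L, x b b'
      ≤ ∑ b ∈ L, ∑ b' ∈ L, (a + if b = b' then d - a else 0) := by
        refine sum_le_sum fun b hb => sum_le_sum fun b' hb' => ?_
        split_ifs with h
        · subst h; linarith [hd b hb]
        · linarith [ha b hb b' hb' h]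
    _ = #L * (d - a + #L * a) := by
        simp only [sum_add_distrib, sum_ite_eq, sum_const, nsmul_eq_mul]
        rw [sum_ite_of_true fun _ h => h]
        simp only [sum_const, nsmul_eq_mul]
        ring

theorem le_add_sqrt_of_sum_mul_eq {κ : Type*} [Fintype κ] {x y : κ → ℝ} {S c B N : ℝ}
    (hxy : ∑ p, x p * y p = S - c) (hx : ∑ p, x p ^ 2 ≤ B) (hy : ∑ p, y p ^ 2 ≤ N) :
    S ≤ c + √(B * N) := by
  have hCS := (Real.sum_mul_le_sqrt_mul_sqrt univ x y).trans
    (mul_le_mul (Real.sqrt_le_sqrt hx) (Real.sqrt_le_sqrt hy) (by positivity) (by positivity))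
  rw [← Real.sqrt_mul ((sum_nonneg fun p _ => sq_nonneg (x p)).trans hx), hxy] at hCS
  linarith

section Agreement

variable {ι A : Type*} [Fintype ι] [Fintype A] [DecidableEq A]

theorem sum_centered_indicator_mul [Nonempty A] (a b : A) :
    ∑ y, ((if a = y then 1 else 0) - (Fintype.card A : ℝ)⁻¹) *
        ((if b = y then 1 else 0) - (Fintype.card A : ℝ)⁻¹) =
      (if a = b then 1 else 0) - (Fintype.card A : ℝ)⁻¹ := by
  simp only [sub_mul, mul_sub, sum_sub_distrib, ite_mul, one_mul, zero_mul, mul_ite, mul_one,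
    mul_zero]
  simp [sum_ite_eq, sum_const]

noncomputable def centeredOneHot (w : ι → A) (p : ι × A) : ℝ :=
  (if w p.1 = p.2 then 1 else 0) - (Fintype.card A : ℝ)⁻¹

theorem sum_centeredOneHot_mul [Nonempty A] (u w : ι → A) :
    ∑ p, centeredOneHot u p * centeredOneHot w p =
      #{i | u i = w i} - Fintype.card ι / Fintype.card A := by
  simp only [centeredOneHot, Fintype.sum_prod_type, sum_centered_indicator_mul, sum_sub_distrib,
    sum_boole, sum_const, card_univ, nsmul_eq_mul, div_eq_mul_inv]

theorem sum_sum_centeredOneHot_mul_sum [Nonempty A] {β : Type*} (L M : Finset β)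
    (u w : β → ι → A) :
    ∑ p, (∑ b ∈ L, centeredOneHot (u b) p) * (∑ b' ∈ M, centeredOneHot (w b') p) =
      ∑ b ∈ L, ∑ b' ∈ M, ((#{i | u b i = w b' i} : ℝ) - Fintype.card ι / Fintype.card A) := by
  simp only [sum_mul_sum, ← sum_centeredOneHot_mul]
  rw [sum_comm]
  exact sum_congr rfl fun b _ => sum_comm

theorem sum_card_agree_le [Nonempty A] {β : Type*} (L : Finset β)
    (w : β → ι → A) (z : ι → A) (a : ℝ) (ha : -1 ≤ a) (hι : Fintype.card ι ≤ Fintype.card A)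
    (hw : ∀ b ∈ L, ∀ b' ∈ L, b ≠ b' → (#{i | w b i = w b' i} : ℝ) ≤ a) :
    ∑ b ∈ L, (#{i | w b i = z i} : ℝ) ≤
      #L * Fintype.card ι / Fintype.card A +
        √(#L * Fintype.card ι * (Fintype.card A + #L * a)) := by
  have hq : (0 : ℝ) < Fintype.card A := by positivity
  have hq1 : (1 : ℝ) ≤ Fintype.card A := by exact_mod_cast Fintype.card_pos
  have hnq : (Fintype.card ι : ℝ) / Fintype.card A ≤ 1 := by
    rw [div_le_one hq]; exact_mod_cast hι
  have hnq0 : (0 : ℝ) ≤ Fintype.card ι / Fintype.card A := by positivity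
  have hXW : ∑ p, (∑ b ∈ L, centeredOneHot (w b) p) * centeredOneHot z p =
      ∑ b ∈ L, (#{i | w b i = z i} : ℝ) - #L * Fintype.card ι / Fintype.card A := by
    simp only [sum_mul]
    rw [sum_comm]
    simp only [sum_centeredOneHot_mul, sum_sub_distrib, sum_const, nsmul_eq_mul, mul_div_assoc]
  have hX : ∑ p, (∑ b ∈ L, centeredOneHot (w b) p) ^ 2 ≤ #L * (Fintype.card A + #L * a) := by
    simp only [sq, sum_sum_centeredOneHot_mul_sum]
    refine (sum_sum_le_of_diag_le_of_offDiag_le L _ (Fintype.card A - 1) a (fun b _ => ?_)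
      fun b hb b' hb' h => ?_).trans ?_
    · simp only [filter_true, card_univ]
      have := div_mul_cancel₀ (Fintype.card ι : ℝ) hq.ne'
      -- `(q - 1) - (n - n/q) = (q - 1)(1 - n/q)`
      nlinarith [mul_nonneg (sub_nonneg.mpr hq1) (sub_nonneg.mpr hnq)]
    · linarith [hw b hb b' hb' h]
    · have : (0 : ℝ) ≤ #L := by positivity
      nlinarith
  have hW : ∑ p, centeredOneHot z p ^ 2 ≤ Fintype.card ι := by
    simp only [sq, sum_centeredOneHot_mul, filter_true, card_univ]
    linarith
  convert le_add_sqrt_of_sum_mul_eq hXW hX hW using 3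
  ring

end Agreement

theorem stmt14_general {F : Type*} [Field F] [Fintype F] [DecidableEq F] (Q n k ℓ : ℕ)
    (hQ : Fintype.card F = Q)
    (α : Fin n → F) (hα : Function.Injective α)
    -- L is a set of ℓ+1 distinct codewords, identified with their message polynomials
    (L : Finset (Fin k → F)) (hL : L.card = ℓ + 1) (z : Fin n → F) :
    (∑ f ∈ L, ((Finset.univ.filter (fun i : Fin n => evalc f (α i) = z i)).card : ℝ))
      ≤ ((ℓ : ℝ) + 1) * n / Q
        + Real.sqrt (((ℓ : ℝ) + 1) * n * (Q + ((ℓ : ℝ) + 1) * (k - 1))) := by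
  subst hQ
  have hm : (ℓ : ℝ) + 1 = #L := by rw [hL]; push_cast; rfl
  have hagree : ∀ f ∈ L, ∀ g ∈ L, f ≠ g →
      (#{i | evalc f (α i) = evalc g (α i)} : ℝ) ≤ k - 1 := fun f _ g _ hfg => by
    rw [le_sub_iff_add_le]
    exact_mod_cast card_filter_evalc_eq_lt hα hfg
  simpa only [hm, Fintype.card_fin] using
    sum_card_agree_le L (fun f i => evalc f (α i)) z (k - 1) (by simp)
      (by simpa using Fintype.card_le_of_injective α hα) hagree

theorem stmt14 {F : Type*} [Field F] [Fintype F] [DecidableEq F] (Q n k ℓ : ℕ)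
    (hQ : Fintype.card F = Q) (hkn : k ≤ n) (hnQ : n ≤ Q)
    (α : Fin n → F) (hα : Function.Injective α)
    -- L is a set of ℓ+1 distinct codewords, identified with their message polynomials
    (L : Finset (Fin k → F)) (hL : L.card = ℓ + 1) (z : Fin n → F) :
    (∑ f ∈ L, ((Finset.univ.filter (fun i : Fin n => evalc f (α i) = z i)).card : ℝ))
      ≤ ((ℓ : ℝ) + 1) * n / Q
        + Real.sqrt (((ℓ : ℝ) + 1) * n * (Q + ((ℓ : ℝ) + 1) * (k - 1))) :=
  stmt14_general Q n k ℓ hQ α hα L hL z
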